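/- With J as in the standard recursion, J(4,k) = (64/3)·16^k + (27/2)·6^k − (250/12)·10^k − 2·4^k − 8·8^k for all k ≥ 0. -/

import Mathlib

/-- `J` satisfies the recursion of Mestre–Oeckl for
`J(n,k) = 2^k (n+k-1)! I(n,k)`. -/
def JRec (J : ℕ → ℤ → ℚ) : Prop :=
  (∀ (n : ℕ) (k : ℤ), k < 0 ∨ n < 1 → J n k = 0) ∧
  J 1 0 = 1 ∧
  ∀ (n k : ℕ), 1 ≤ n → (n, k) ≠ (1, 0) →
    J n k = (n : ℚ) ^ 2 * J n ((k : ℤ) - 1) +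
      (1 / 2) * ∑ i ∈ Finset.Icc 1 (n - 1), ∑ j ∈ Finset.range (k + 1),
        ((n + k - 2).choose (i + j - 1) : ℚ) * (i : ℚ) * ((n - i : ℕ) : ℚ) *
          J i j * J (n - i) ((k : ℤ) - (j : ℤ))

/-!
For `n ≤ 4`, `k ↦ J(n,k)` is a finite sum of exponentials `c · a^k`, and this propagates
through the recursion: if `J(i,·)` and `J(n-i,·)` are exponential sums, each product
`a^j b^(k-j)` in the quadratic term, summed against `C(n+k-2, i+j-1)`, is a window of the
binomial expansion of `(a+b)^(n+k-2)`, hence `(a+b)^(n+k-2)` minus a few boundary terms, all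
divided by `a^(i-1) b^(n-i-1)`. So `J(n,k) - n² J(n,k-1)` is an explicit exponential sum, and
the closed form of `J(n,·)` follows by induction on `k`, successively for `n = 1, 2, 3, 4`.
-/

open Finset

section Binomial

variable {R : Type*}

theorem add_pow_split [CommSemiring R] (a b : R) (p q k : ℕ) :
    (a + b) ^ (p + q + k) =
      ∑ m ∈ range p, ((p + q + k).choose m : R) * a ^ m * b ^ (q + k + (p - m)) +
      a ^ p * b ^ q * ∑ j ∈ range (k + 1), ((p + q + k).choose (p + j) : R) * a ^ j * b ^ (k - j) +
      ∑ m ∈ range q, ((p + q + k).choose m : R) * a ^ (p + k + (q - m)) * b ^ m := by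
  rw [add_pow, show p + q + k + 1 = p + (k + 1) + q by omega, sum_range_add, sum_range_add,
    mul_sum, ← sum_range_reflect _ q]
  congr 1
  congr 1
  · refine sum_congr rfl fun m hm => ?_
    rw [show p + q + k - m = q + k + (p - m) by have := mem_range.1 hm; omega]
    ring
  · refine sum_congr rfl fun j hj => ?_
    rw [show p + q + k - (p + j) = q + (k - j) by have := mem_range.1 hj; omega]
    ring
  · refine sum_congr rfl fun m hm => ?_
    have := mem_range.1 hm
    rw [show p + (k + 1) + (q - 1 - m) = p + k + (q - m) by omega,
      show p + q + k - (p + k + (q - m)) = m by omega,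
      Nat.choose_symm_of_eq_add (b := m) (by omega)]
    ring

def binomConv [CommSemiring R] (p q : ℕ) (f g : ℕ → R) (k : ℕ) : R :=
  ∑ j ∈ range (k + 1), ((p + q + k).choose (p + j) : R) * f j * g (k - j)

def expSum [CommSemiring R] {ι : Type*} [Fintype ι] (c a : ι → R) (k : ℕ) : R :=
  ∑ t, c t * a t ^ k

theorem binomConv_expSum [CommSemiring R] {ι κ : Type*} [Fintype ι] [Fintype κ]
    (c a : ι → R) (d b : κ → R) (p q k : ℕ) :
    binomConv p q (expSum c a) (expSum d b) k =
      ∑ t, ∑ u, c t * d u * binomConv p q (a t ^ ·) (b u ^ ·) k := by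
  simp only [binomConv, expSum, mul_sum, sum_mul]
  conv_rhs => enter [2, t]; rw [sum_comm]
  rw [sum_comm (s := univ)]
  refine sum_congr rfl fun j _ => ?_
  rw [sum_comm]
  exact sum_congr rfl fun t _ => sum_congr rfl fun u _ => by ring

theorem binomConv_pow_pow [Field R] (p q k : ℕ) {a b : R} (ha : a ≠ 0) (hb : b ≠ 0) :
    binomConv p q (a ^ ·) (b ^ ·) k =
      ((a + b) ^ (p + q + k)
        - ∑ m ∈ range p, ((p + q + k).choose m : R) * a ^ m * b ^ (q + k + (p - m))
        - ∑ m ∈ range q, ((p + q + k).choose m : R) * a ^ (p + k + (q - m)) * b ^ m)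
        / (a ^ p * b ^ q) := by
  rw [eq_div_iff (by positivity), binomConv, add_pow_split]
  ring

end Binomial

/-- The quadratic term of the recursion for `n = m + 2`; the splitting `n = i + (n - i)` is
indexed by `(i - 1, n - i - 1) ∈ antidiagonal m`. -/
def splitSum (J : ℕ → ℤ → ℚ) (m k : ℕ) : ℚ :=
  ∑ x ∈ antidiagonal m, ((x.1 + 1) * (x.2 + 1) : ℚ) *
    binomConv x.1 x.2 (fun j => J (x.1 + 1) j) (fun j => J (x.2 + 1) j) k

namespace JRec

variable {J : ℕ → ℤ → ℚ}

theorem add_two_apply (hJ : JRec J) (m k : ℕ) :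
    J (m + 2) k = (m + 2) ^ 2 * J (m + 2) ((k : ℤ) - 1) + splitSum J m k / 2 := by
  rw [hJ.2.2 (m + 2) k (by omega) (by simp)]
  have hIcc : Icc 1 (m + 2 - 1) = (range (m + 1)).image (· + 1) := by
    rw [Nat.range_succ_eq_Icc_zero, image_add_right_Icc]; rfl
  rw [hIcc, sum_image (by simp), splitSum, Nat.sum_antidiagonal_eq_sum_range_succ_mk, sum_div,
    mul_sum]
  push_cast
  congr 1
  refine sum_congr rfl fun i hi => ?_
  have hi := mem_range.1 hi
  rw [binomConv, mul_sum, mul_sum, sum_div]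
  refine sum_congr rfl fun j hj => ?_
  have hj := mem_range.1 hj
  rw [show m + 1 - i = m - i + 1 by omega, show m + 2 + k - 2 = i + (m - i) + k by omega,
    show i + 1 + j - 1 = i + j by omega, show (k : ℤ) - j = ((k - j : ℕ) : ℤ) by omega]
  push_cast
  ring

theorem add_two_eq_of_rec (hJ : JRec J) (m : ℕ) {F : ℕ → ℚ} (h0 : F 0 = splitSum J m 0 / 2)
    (hF : ∀ k, F (k + 1) = (m + 2) ^ 2 * F k + splitSum J m (k + 1) / 2) :
    (fun k : ℕ => J (m + 2) k) = F := by
  funext k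
  induction k with
  | zero => rw [hJ.add_two_apply, hJ.1 _ _ (by simp), h0]; ring
  | succ k ih => rw [hJ.add_two_apply, hF, ← ih]; push_cast; ring_nf

theorem one_eq_expSum (hJ : JRec J) : (fun k : ℕ => J 1 k) = expSum ![1] ![1] := by
  funext k
  induction k with
  | zero => simpa [expSum] using hJ.2.1
  | succ k ih =>
    rw [hJ.2.2 1 (k + 1) le_rfl (by simp)]
    simpa [expSum] using ih

/- `one_pow` is switched off below, so that `binomConv_pow_pow` still sees `J(1,·) = 1 ^ ·` as an
exponential. -/

theorem two_eq_expSum (hJ : JRec J) : (fun k : ℕ => J 2 k) = expSum ![1, -1/2] ![4, 2] := by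
  refine hJ.add_two_eq_of_rec 0 ?_ fun k => ?_ <;>
    simp [splitSum, hJ.one_eq_expSum, binomConv_expSum, binomConv_pow_pow, expSum,
      Fin.sum_univ_succ, -one_pow] <;>
    ring

theorem three_eq_expSum (hJ : JRec J) :
    (fun k : ℕ => J 3 k) = expSum ![27/8, -25/8, 3/4] ![9, 5, 3] := by
  refine hJ.add_two_eq_of_rec 1 ?_ fun k => ?_ <;>
    simp [splitSum, Nat.sum_antidiagonal_succ, hJ.one_eq_expSum, hJ.two_eq_expSum,
      binomConv_expSum, binomConv_pow_pow, expSum, Fin.sum_univ_succ, -one_pow] <;>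
    ring

theorem four_eq_expSum (hJ : JRec J) :
    (fun k : ℕ => J 4 k) = expSum ![64/3, 27/2, -250/12, -2, -8] ![16, 6, 10, 4, 8] := by
  refine hJ.add_two_eq_of_rec 2 ?_ fun k => ?_ <;>
    simp [splitSum, Nat.sum_antidiagonal_succ, hJ.one_eq_expSum, hJ.two_eq_expSum,
      hJ.three_eq_expSum, binomConv_expSum, binomConv_pow_pow, expSum, Fin.sum_univ_succ,
      sum_range_succ, -one_pow] <;>
    ring

end JRec

theorem J_four_k (J : ℕ → ℤ → ℚ) (hJ : JRec J) :
    ∀ k : ℕ, J 4 k = (64 / 3) * 16 ^ k + (27 / 2) * 6 ^ k - (250 / 12) * 10 ^ k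
      - 2 * 4 ^ k - 8 * 8 ^ k := by
  intro k
  have h : J 4 k = expSum _ _ k := congrFun hJ.four_eq_expSum k
  simp [expSum, Fin.sum_univ_succ] at h
  rw [h]
  ring
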